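/- Partial Fourier transform of the coherent-state weight: let ψ ∈ L²(ℂ*,d²x) ∩ L¹ and ϖ_ψ(q,p) = |q|⁻¹⟨ψ_{q,p}, ψ⟩ with ψ_{q,p}(x) = |q|⁻¹e^{iRe(\overline{p}x)}ψ(x/q). Then its partial Fourier transform in p, \hat{ϖ}_{ψ,p}(u,v) := (1/2π)∫_ℂ e^{-iRe(\overline{p}v)} ϖ_ψ(u,p) d²p, equals 2π |u|⁻² ψ(-v) · \overline{ψ(-v/u)}. In particular \hat{ϖ}_{ψ,p}(1,-x) = 2π|ψ(x)|² (for real or after conjugation conventions, |ψ(x)|² when evaluated on the diagonal). -/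

import Mathlib

set_option maxHeartbeats 1000000

open Complex MeasureTheory
open scoped FourierTransform RealInnerProductSpace InnerProductSpace

private lemma schwartz_decay_aux {f : ℂ → ℂ} (hf : ContDiff ℝ (⊤ : ℕ∞) f)
    (hc : HasCompactSupport f) (k n : ℕ) :
    ∃ C, ∀ x : ℂ, ‖x‖ ^ k * ‖iteratedFDeriv ℝ n f x‖ ≤ C := by
  obtain ⟨M, hM⟩ := (hf.continuous_iteratedFDeriv
    (by exact_mod_cast le_top)).bounded_above_of_compact_support (hc.iteratedFDeriv n)
  have hM0 : 0 ≤ M := le_trans (norm_nonneg _) (hM 0)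
  obtain ⟨r, hr⟩ := (hc.iteratedFDeriv (𝕜 := ℝ) n).isBounded.subset_closedBall 0
  refine ⟨(max r 0) ^ k * M, fun x => ?_⟩
  by_cases hx : x ∈ tsupport (iteratedFDeriv ℝ n f)
  · have hxr : ‖x‖ ≤ max r 0 := by
      have := hr hx
      simp only [Metric.mem_closedBall, dist_zero_right] at this
      exact this.trans (le_max_left _ _)
    exact mul_le_mul (pow_le_pow_left₀ (norm_nonneg _) hxr k) (hM x) (norm_nonneg _)
      (by positivity)
  · rw [image_eq_zero_of_notMem_tsupport hx]
    simp only [norm_zero, mul_zero]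
    positivity

/-- A smooth compactly supported function as a Schwartz map. -/
noncomputable def toSchwartzAux (f : ℂ → ℂ) (hf : ContDiff ℝ (⊤ : ℕ∞) f)
    (hc : HasCompactSupport f) : SchwartzMap ℂ ℂ :=
  { toFun := f, smooth' := hf.of_le (by simp), decay' := schwartz_decay_aux hf hc }

private lemma integrable_fourier_aux {f : ℂ → ℂ} (hf : ContDiff ℝ (⊤ : ℕ∞) f)
    (hc : HasCompactSupport f) : Integrable (𝓕 f) := by
  have h : 𝓕 f = ⇑(SchwartzMap.fourierTransformCLM ℝ (toSchwartzAux f hf hc)) := by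
    rw [SchwartzMap.fourierTransformCLM_apply]; rfl
  rw [h]
  exact (SchwartzMap.fourierTransformCLM ℝ (toSchwartzAux f hf hc)).integrable

/-- The SIM(2) representation (U(q,p)ψ)(x) = |q|⁻¹ e^{i Re(conj(p)·x)} ψ(x/q). -/
noncomputable def Uop (q p : ℂ) (ψ : ℂ → ℂ) : ℂ → ℂ :=
  fun x => (Complex.exp (Complex.I * ((((starRingEnd ℂ p) * x).re : ℝ) : ℂ)) / (‖q‖ : ℂ)) *
    ψ (x / q)

/-- The coherent-state weight ϖ_ψ(q,p) = |q|⁻¹ ⟨ψ_{q,p}, ψ⟩. -/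
noncomputable def cw (ψ : ℂ → ℂ) (q p : ℂ) : ℂ :=
  (‖q‖ : ℂ)⁻¹ * ∫ x : ℂ, starRingEnd ℂ (Uop q p ψ x) * ψ x

/-- Partial Fourier transform (in p) of the coherent-state weight:
(1/2π) ∫ e^{-i Re(conj(p)·v)} ϖ_ψ(u,p) d²p = 2π |u|⁻² ψ(-v) conj(ψ(-v/u)),
for ψ smooth with compact support in the punctured plane. -/
theorem stmt14 (ψ : ℂ → ℂ) (hs : ContDiff ℝ (⊤ : ℕ∞) ψ) (hcs : HasCompactSupport ψ)
    (h0 : (0 : ℂ) ∉ tsupport ψ) (u v : ℂ) (hu : u ≠ 0) :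
    ((1 / (2 * Real.pi) : ℝ) : ℂ) *
        ∫ p : ℂ, Complex.exp (-Complex.I * ((((starRingEnd ℂ p) * v).re : ℝ) : ℂ)) * cw ψ u p =
      2 * (Real.pi : ℂ) * ((‖u‖ ^ 2 : ℝ) : ℂ)⁻¹ * ψ (-v) * starRingEnd ℂ (ψ (-v / u)) := by
  have hπ : (Real.pi : ℝ) ≠ 0 := Real.pi_ne_zero
  have hu' : (‖u‖ : ℂ) ≠ 0 := by
    simpa using norm_ne_zero_iff.mpr hu
  set g : ℂ → ℂ := fun x => starRingEnd ℂ (ψ (x / u)) * ψ x with hg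
  have hgsm : ContDiff ℝ (⊤ : ℕ∞) g := by
    exact ((Complex.conjCLE.contDiff).comp (hs.comp (contDiff_id.div_const u))).mul hs
  have hgcs : HasCompactSupport g := hcs.mul_left
  have hgc : Continuous g := hgsm.continuous
  have hgint : Integrable g := hgc.integrable_of_hasCompactSupport hgcs
  have hFint : Integrable (𝓕 g) := integrable_fourier_aux hgsm hgcs
  -- Step 1: rewrite cw as a Fourier transform of g
  have hcw : ∀ p : ℂ, cw ψ u p = (‖u‖ : ℂ)⁻¹ * (‖u‖ : ℂ)⁻¹ *
      𝓕 g ((2 * Real.pi)⁻¹ • p) := by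
    intro p
    have hpt : ∀ x : ℂ, starRingEnd ℂ (Uop u p ψ x) * ψ x
        = (‖u‖ : ℂ)⁻¹ *
          (Complex.exp (((-2 * Real.pi * ⟪x, (2 * Real.pi)⁻¹ • p⟫_ℝ : ℝ) : ℂ) * Complex.I) • g x) := by
      intro x
      have hinner : -2 * Real.pi * ⟪x, (2 * Real.pi)⁻¹ • p⟫_ℝ
          = -(((starRingEnd ℂ p) * x).re) := by
        rw [real_inner_smul_right, Complex.inner]
        have hre : (p * (starRingEnd ℂ) x).re = ((starRingEnd ℂ) p * x).re := by
          simp only [Complex.mul_re, Complex.conj_re, Complex.conj_im]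
          ring
        rw [hre]
        field_simp
      rw [hinner]
      have hexp : Complex.exp ((((-(((starRingEnd ℂ) p * x).re) : ℝ)) : ℂ) * Complex.I)
          = Complex.exp (-Complex.I * ((((starRingEnd ℂ) p * x).re : ℝ) : ℂ)) := by
        congr 1
        push_cast
        ring
      rw [hexp]
      simp only [Uop, smul_eq_mul, hg, map_mul, map_div₀, ← Complex.exp_conj, Complex.conj_I,
        Complex.conj_ofReal]
      ring
    rw [cw]
    rw [integral_congr_ae (Filter.Eventually.of_forall hpt)]
    simp only [smul_eq_mul]
    rw [integral_const_mul, Real.fourier_eq']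
    simp only [smul_eq_mul]
    push_cast
    ring
  -- Step 2: the outer integral
  set h : ℂ → ℂ := fun w =>
    Complex.exp (((-2 * Real.pi * ⟪w, v⟫_ℝ : ℝ) : ℂ) * Complex.I) * 𝓕 g w with hh
  have hpt2 : ∀ p : ℂ,
      Complex.exp (-Complex.I * ((((starRingEnd ℂ p) * v).re : ℝ) : ℂ)) * cw ψ u p
        = (‖u‖ : ℂ)⁻¹ * (‖u‖ : ℂ)⁻¹ * h ((2 * Real.pi)⁻¹ • p) := by
    intro p
    rw [hcw p]
    have hinner : -2 * Real.pi * ⟪(2 * Real.pi)⁻¹ • p, v⟫_ℝ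
        = -(((starRingEnd ℂ p) * v).re) := by
      rw [real_inner_smul_left, Complex.inner]
      field_simp
    simp only [hh, hinner]
    push_cast
    ring
  rw [integral_congr_ae (Filter.Eventually.of_forall hpt2), integral_const_mul]
  have hcomp : ∫ p : ℂ, h ((2 * Real.pi)⁻¹ • p)
      = |(2 * Real.pi) ^ Module.finrank ℝ ℂ| • ∫ w : ℂ, h w :=
    Measure.integral_comp_inv_smul volume h (2 * Real.pi)
  have hint : ∫ w : ℂ, h w = 𝓕 (𝓕 g) v := by
    rw [Real.fourier_eq']
    simp only [hh, smul_eq_mul]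
  have hinv : 𝓕 (𝓕 g) v = g (-v) := by
    have h1 : 𝓕⁻ (𝓕 g) (-v) = 𝓕 (𝓕 g) v := by
      rw [Real.fourierInv_eq_fourier_neg, neg_neg]
    rw [← h1]
    exact hgint.fourierInv_fourier_eq hFint hgc.continuousAt
  rw [hcomp, hint, hinv, Complex.finrank_real_complex]
  have hgneg : g (-v) = starRingEnd ℂ (ψ (-v / u)) * ψ (-v) := rfl
  rw [hgneg, _root_.abs_of_nonneg (by positivity : (0:ℝ) ≤ (2 * Real.pi) ^ 2), Complex.real_smul]
  have hcast : ((‖u‖ ^ 2 : ℝ) : ℂ) = (‖u‖ : ℂ) ^ 2 := by push_cast; ring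
  rw [hcast]
  have hπc : (Real.pi : ℂ) ≠ 0 := Complex.ofReal_ne_zero.mpr hπ
  have key : ((1 / (2 * Real.pi) : ℝ) : ℂ) * (((2 * Real.pi) ^ 2 : ℝ) : ℂ)
      = 2 * (Real.pi : ℂ) := by
    push_cast
    field_simp
  linear_combination ((‖u‖ : ℂ)⁻¹ * (‖u‖ : ℂ)⁻¹ *
    ((starRingEnd ℂ) (ψ (-v / u)) * ψ (-v))) * key
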